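/- Let W be a 4-dimensional linear subspace of ℝ⁷. Then φ₀(w₁, w₂, w₃) = 0 for all w₁, w₂, w₃ ∈ W (i.e. W is a coassociative subspace) if and only if W = W_I^{⊥,2} (i.e. W is Type-I 2-Lagrangian with respect to φ₀). -/

import Mathlib

/-!
Coassociativity of `W` says exactly `W ⊆ W_I^{⊥,2}`, so it suffices that `W_I^{⊥,2} ⊆ W` whenever
`dim W ≥ 4`. If `v ∈ W_I^{⊥,2}` but `v ∉ W`, the `G₂` cross product `w ↦ v × w` sends `W` into the
orthogonal complement of `W`, injectively because `(v × w) × w = ⟨v, w⟩ w - |w|² v`. Hence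
`(w, w') ↦ w + v × w'` embeds `W × W` into `ℝ⁷`, which is impossible since `8 > 7`.
-/

open Module

/-- The exterior 3-form `dxᵃ ∧ dxᵇ ∧ dxᶜ` on `ℝ⁷`. -/
noncomputable def dx3 (a b c : Fin 7) : (Fin 7 → ℝ) [⋀^Fin 3]→ₗ[ℝ] ℝ :=
  (Matrix.detRowAlternating : (Fin 3 → ℝ) [⋀^Fin 3]→ₗ[ℝ] ℝ).compLinearMap
    (LinearMap.funLeft ℝ ℝ ![a, b, c])

/-- The standard `G₂` 3-form
`φ₀ = dx¹²³ + dx¹⁴⁵ + dx¹⁶⁷ + dx²⁴⁶ − dx²⁵⁷ − dx³⁴⁷ − dx³⁵⁶` on `ℝ⁷`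
(with indices shifted to `0, …, 6`). -/
noncomputable def phi0 : (Fin 7 → ℝ) [⋀^Fin 3]→ₗ[ℝ] ℝ :=
  dx3 0 1 2 + dx3 0 3 4 + dx3 0 5 6 + dx3 1 3 5 - dx3 1 4 6 - dx3 2 3 6 - dx3 2 4 5

/-- The Type-I 1st orthogonal complement of `W ⊆ ℝ⁷` with respect to `φ₀`. -/
def WIperp1 (W : Submodule ℝ (Fin 7 → ℝ)) : Set (Fin 7 → ℝ) :=
  {v | ∀ w ∈ W, ∀ u : Fin 7 → ℝ, phi0 ![v, w, u] = 0}

/-- The Type-I 2nd orthogonal complement of `W ⊆ ℝ⁷` with respect to `φ₀`. -/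
def WIperp2 (W : Submodule ℝ (Fin 7 → ℝ)) : Set (Fin 7 → ℝ) :=
  {v | ∀ w₁ ∈ W, ∀ w₂ ∈ W, phi0 ![v, w₁, w₂] = 0}

lemma dx3_apply (a b c : Fin 7) (u v w : Fin 7 → ℝ) :
    dx3 a b c ![u, v, w] =
      u a * (v b * w c - v c * w b) - u b * (v a * w c - v c * w a)
        + u c * (v a * w b - v b * w a) := by
  change Matrix.det (Matrix.of fun i j => ![u, v, w] i (![a, b, c] j)) = _
  simp [Matrix.det_fin_three]
  ring

noncomputable def cross (u v : Fin 7 → ℝ) (k : Fin 7) : ℝ :=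
  phi0 ![u, v, Pi.single k 1]

lemma cross_dotProduct (u v w : Fin 7 → ℝ) : cross u v ⬝ᵥ w = phi0 ![u, v, w] := by
  simp [cross, phi0, dx3_apply, dotProduct, Fin.sum_univ_seven, Pi.single_apply]
  ring

lemma cross_zero_left (v : Fin 7 → ℝ) : cross 0 v = 0 := by
  funext k
  simp [cross, phi0, dx3_apply]

lemma cross_cross_right (u v : Fin 7 → ℝ) :
    cross (cross u v) v = (u ⬝ᵥ v) • v - (v ⬝ᵥ v) • u := by
  funext k
  fin_cases k <;>
  · simp [cross, phi0, dx3_apply, dotProduct, Fin.sum_univ_seven]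
    ring

noncomputable def crossRight (u : Fin 7 → ℝ) : (Fin 7 → ℝ) →ₗ[ℝ] (Fin 7 → ℝ) where
  toFun := cross u
  map_add' v w := by
    funext k
    simp only [Pi.add_apply, cross, phi0, AlternatingMap.add_apply, AlternatingMap.sub_apply,
      dx3_apply]
    ring
  map_smul' c v := by
    funext k
    simp only [Pi.smul_apply, smul_eq_mul, RingHom.id_apply, cross, phi0, AlternatingMap.add_apply,
      AlternatingMap.sub_apply, dx3_apply]
    ring

lemma mem_span_singleton_of_cross_eq_zero {u v : Fin 7 → ℝ} (h : cross u v = 0) (hv : v ≠ 0) :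
    u ∈ Submodule.span ℝ {v} := by
  have hvv : v ⬝ᵥ v ≠ 0 := fun h0 => hv (dotProduct_self_eq_zero.mp h0)
  have key : (u ⬝ᵥ v) • v = (v ⬝ᵥ v) • u := by
    simpa [h, cross_zero_left, sub_eq_zero, eq_comm] using cross_cross_right u v
  refine Submodule.mem_span_singleton.mpr ⟨(v ⬝ᵥ v)⁻¹ * (u ⬝ᵥ v), ?_⟩
  rw [mul_smul, key, smul_smul, inv_mul_cancel₀ hvv, one_smul]

lemma injective_add_cross {W : Submodule ℝ (Fin 7 → ℝ)} {v : Fin 7 → ℝ} (hv : v ∈ WIperp2 W)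
    (hvW : v ∉ W) : Function.Injective (W.subtype.coprod (crossRight v ∘ₗ W.subtype)) := by
  rw [← LinearMap.ker_eq_bot, LinearMap.ker_eq_bot']
  rintro ⟨⟨w, hw⟩, ⟨w', hw'⟩⟩ h
  change w + cross v w' = 0 at h
  have hw0 : w = 0 := by
    refine dotProduct_self_eq_zero.mp ?_
    nth_rw 1 [eq_neg_of_add_eq_zero_left h]
    rw [neg_dotProduct, cross_dotProduct, hv w' hw' w hw, neg_zero]
  have hw'0 : w' = 0 := by
    by_contra hw'0
    rw [hw0, zero_add] at h
    exact hvW (Submodule.span_singleton_le_iff_mem _ _ |>.mpr hw'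
      (mem_span_singleton_of_cross_eq_zero h hw'0))
  simp [hw0, hw'0]

lemma WIperp2_subset_of_four_le_finrank {W : Submodule ℝ (Fin 7 → ℝ)} (hW : 4 ≤ finrank ℝ W) :
    WIperp2 W ⊆ W := by
  intro v hv
  by_contra hvW
  have hle := LinearMap.finrank_le_finrank_of_injective (injective_add_cross hv hvW)
  rw [Module.finrank_prod, Module.finrank_fin_fun] at hle
  omega

/-- a 4-dimensional subspace `W` of `ℝ⁷` is coassociative (`φ₀` restricts to
zero on `W`) if and only if `W = W_I^{⊥,2}` (i.e. `W` is Type-I 2-Lagrangian w.r.t. `φ₀`). -/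
theorem g2_coassociative_iff_lagrangian (W : Submodule ℝ (Fin 7 → ℝ))
    (hW : Module.finrank ℝ W = 4) :
    (∀ w₁ ∈ W, ∀ w₂ ∈ W, ∀ w₃ ∈ W, phi0 ![w₁, w₂, w₃] = 0) ↔
      (W : Set (Fin 7 → ℝ)) = WIperp2 W := by
  constructor
  · intro hW_coassoc
    exact Set.Subset.antisymm hW_coassoc (WIperp2_subset_of_four_le_finrank hW.ge)
  · intro hW_eq w₁ hw₁
    exact (hW_eq ▸ hw₁ : w₁ ∈ WIperp2 W)
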